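/- arXiv:1806.08830 — 3 statements merged into one kernel-verified Lean document; each statement's English description precedes it below -/
import Mathlib

section
/- Let α : I → ℝ³ be a C² regular curve parametrized by arc-length equipped with a rotation minimizing frame {t, n₁, n₂} satisfying t' = κ₁n₁ + κ₂n₂, n₁' = −κ₁t, n₂' = −κ₂t. Then α lies on a sphere of radius r > 0 if and only if there exist constants a₁, a₂ with a₁κ₁(s) + a₂κ₂(s) + 1 = 0 for all s, and in that case r² = a₁² + a₂². -/
/-- Euclidean dot product on `ℝ³`. -/
noncomputable def edot (x y : Fin 3 → ℝ) : ℝ := ∑ i, x i * y i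

/-!
If `α` lies on the sphere with center `P`, then `v = α - P` is orthogonal to `t`, hence
`⟨nᵢ, v⟩' = -κᵢ ⟨t, v⟩ + ⟨nᵢ, t⟩ = 0`: the coordinates `aᵢ = ⟨nᵢ, v⟩` of `v = a₁ n₁ + a₂ n₂` in
the frame are constant, and differentiating `⟨t, v⟩ = 0` gives `a₁ κ₁ + a₂ κ₂ + 1 = 0`.
Conversely, under this relation `α - a₁ n₁ - a₂ n₂` has derivative `(1 + a₁ κ₁ + a₂ κ₂) t = 0`,
so it is a constant `P`, and `|α - P|² = |a₁ n₁ + a₂ n₂|² = a₁² + a₂²`.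
-/

open Matrix

theorem HasDerivAt.eq_zero_of_forall_eq {F : Type*} [NormedAddCommGroup F] [NormedSpace ℝ F]
    {g : ℝ → F} {g' c : F} {s : ℝ} (hg : HasDerivAt g g' s) (hc : ∀ u, g u = c) : g' = 0 := by
  rw [funext hc] at hg
  exact hg.unique (hasDerivAt_const s c)

theorem eq_of_hasDerivAt_zero {F : Type*} [NormedAddCommGroup F] [NormedSpace ℝ F]
    {g : ℝ → F} (hg : ∀ s, HasDerivAt g 0 s) (x y : ℝ) : g x = g y :=
  is_const_of_deriv_eq_zero (fun u => (hg u).differentiableAt) (fun u => (hg u).deriv) x y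

section DotProduct

variable {ι : Type*} [Fintype ι]

theorem HasDerivAt.dotProduct {f g : ℝ → ι → ℝ} {f' g' : ι → ℝ} {s : ℝ}
    (hf : HasDerivAt f f' s) (hg : HasDerivAt g g' s) :
    HasDerivAt (fun u => f u ⬝ᵥ g u) (f' ⬝ᵥ g s + f s ⬝ᵥ g') s := by
  have h : HasDerivAt (fun u => ∑ i, f u i * g u i) (∑ i, (f' i * g s i + f s i * g' i)) s :=
    HasDerivAt.fun_sum fun i _ => ((hasDerivAt_pi.mp hf) i).mul ((hasDerivAt_pi.mp hg) i)
  rwa [Finset.sum_add_distrib] at h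

theorem eq_sum_dotProduct_smul_of_orthonormal [DecidableEq ι] (b : ι → ι → ℝ)
    (hb : ∀ i j, b i ⬝ᵥ b j = if i = j then 1 else 0) (w : ι → ℝ) :
    w = ∑ i, (b i ⬝ᵥ w) • b i := by
  let M : Matrix ι ι ℝ := Matrix.of b
  have hM : M * Mᵀ = 1 := by
    ext i j
    simpa [M, Matrix.mul_apply, Matrix.one_apply, dotProduct] using hb i j
  calc w = (Mᵀ * M) *ᵥ w := by rw [mul_eq_one_comm.mp hM, one_mulVec]
    _ = ∑ i, (b i ⬝ᵥ w) • b i := by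
      rw [← mulVec_mulVec, mulVec_transpose, vecMul_eq_sum]; rfl

theorem dotProduct_self_add_smul_of_orthonormal {u v : ι → ℝ} (huu : u ⬝ᵥ u = 1)
    (hvv : v ⬝ᵥ v = 1) (huv : u ⬝ᵥ v = 0) (a b : ℝ) :
    (a • u + b • v) ⬝ᵥ (a • u + b • v) = a ^ 2 + b ^ 2 := by
  simp only [add_dotProduct, dotProduct_add, smul_dotProduct, dotProduct_smul, smul_eq_mul,
    dotProduct_comm v u, huu, hvv, huv]
  ring

theorem dotProduct_deriv_self_eq_zero {f f' : ℝ → ι → ℝ} {c : ℝ}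
    (hf : ∀ s, HasDerivAt f (f' s) s) (hc : ∀ s, f s ⬝ᵥ f s = c) (s : ℝ) :
    f' s ⬝ᵥ f s = 0 := by
  have h := ((hf s).dotProduct (hf s)).eq_zero_of_forall_eq hc
  rw [dotProduct_comm (f s)] at h
  linarith

theorem dotProduct_normal_eq_of_orthogonal {n t v : ℝ → ι → ℝ} {κ : ℝ → ℝ}
    (hn : ∀ s, HasDerivAt n (-κ s • t s) s) (hv : ∀ s, HasDerivAt v (t s) s)
    (htn : ∀ s, t s ⬝ᵥ n s = 0) (htv : ∀ s, t s ⬝ᵥ v s = 0) (x y : ℝ) :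
    n x ⬝ᵥ v x = n y ⬝ᵥ v y := by
  refine eq_of_hasDerivAt_zero (g := fun u => n u ⬝ᵥ v u) (fun s => ?_) x y
  refine ((hn s).dotProduct (hv s)).congr_deriv ?_
  rw [smul_dotProduct, htv, dotProduct_comm, htn, smul_zero, add_zero]

theorem exists_center_of_curvature_relation {α t n₁ n₂ : ℝ → ι → ℝ} {κ₁ κ₂ : ℝ → ℝ}
    (hα : ∀ s, HasDerivAt α (t s) s)
    (hn₁ : ∀ s, HasDerivAt n₁ (-κ₁ s • t s) s) (hn₂ : ∀ s, HasDerivAt n₂ (-κ₂ s • t s) s)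
    {a₁ a₂ : ℝ} (hrel : ∀ s, a₁ * κ₁ s + a₂ * κ₂ s + 1 = 0) :
    ∃ P, ∀ s, α s - P = a₁ • n₁ s + a₂ • n₂ s := by
  have hP : ∀ s, HasDerivAt (fun u => α u - (a₁ • n₁ u + a₂ • n₂ u)) 0 s := fun s => by
    refine ((hα s).sub (((hn₁ s).const_smul a₁).add ((hn₂ s).const_smul a₂))).congr_deriv ?_
    rw [show t s - (a₁ • -κ₁ s • t s + a₂ • -κ₂ s • t s) = (a₁ * κ₁ s + a₂ * κ₂ s + 1) • t s by
      module, hrel, zero_smul]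
  exact ⟨α 0 - (a₁ • n₁ 0 + a₂ • n₂ 0), fun s => by
    rw [← eq_of_hasDerivAt_zero hP s 0, sub_sub_cancel]⟩

end DotProduct

theorem eq_smul_add_smul_of_orthonormal {t n₁ n₂ w : Fin 3 → ℝ} (htt : t ⬝ᵥ t = 1)
    (hn₁n₁ : n₁ ⬝ᵥ n₁ = 1) (hn₂n₂ : n₂ ⬝ᵥ n₂ = 1) (htn₁ : t ⬝ᵥ n₁ = 0) (htn₂ : t ⬝ᵥ n₂ = 0)
    (hn₁n₂ : n₁ ⬝ᵥ n₂ = 0) (htw : t ⬝ᵥ w = 0) :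
    w = (n₁ ⬝ᵥ w) • n₁ + (n₂ ⬝ᵥ w) • n₂ := by
  have hb : ∀ i j, ![t, n₁, n₂] i ⬝ᵥ ![t, n₁, n₂] j = if i = j then 1 else 0 := by
    intro i j
    fin_cases i <;> fin_cases j <;>
      simp [htt, hn₁n₁, hn₂n₂, htn₁, htn₂, hn₁n₂, dotProduct_comm n₁ t, dotProduct_comm n₂ t,
        dotProduct_comm n₂ n₁]
  conv_lhs => rw [eq_sum_dotProduct_smul_of_orthonormal _ hb w]
  simp [Fin.sum_univ_three, htw]

theorem curvature_relation_of_sphere {α t n₁ n₂ : ℝ → Fin 3 → ℝ} {κ₁ κ₂ : ℝ → ℝ}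
    (hα : ∀ s, HasDerivAt α (t s) s) (ht : ∀ s, HasDerivAt t (κ₁ s • n₁ s + κ₂ s • n₂ s) s)
    (hn₁ : ∀ s, HasDerivAt n₁ (-κ₁ s • t s) s) (hn₂ : ∀ s, HasDerivAt n₂ (-κ₂ s • t s) s)
    (htt : ∀ s, t s ⬝ᵥ t s = 1) (hn₁n₁ : ∀ s, n₁ s ⬝ᵥ n₁ s = 1) (hn₂n₂ : ∀ s, n₂ s ⬝ᵥ n₂ s = 1)
    (htn₁ : ∀ s, t s ⬝ᵥ n₁ s = 0) (htn₂ : ∀ s, t s ⬝ᵥ n₂ s = 0) (hn₁n₂ : ∀ s, n₁ s ⬝ᵥ n₂ s = 0)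
    {P : Fin 3 → ℝ} {c : ℝ} (hP : ∀ s, (α s - P) ⬝ᵥ (α s - P) = c) :
    ∃ a₁ a₂ : ℝ, (∀ s, a₁ * κ₁ s + a₂ * κ₂ s + 1 = 0) ∧ c = a₁ ^ 2 + a₂ ^ 2 := by
  set v := fun s => α s - P
  have hv : ∀ s, HasDerivAt v (t s) s := fun s => (hα s).sub_const P
  have htv : ∀ s, t s ⬝ᵥ v s = 0 := dotProduct_deriv_self_eq_zero hv hP
  obtain ⟨a₁, ha₁⟩ : ∃ a, ∀ s, n₁ s ⬝ᵥ v s = a :=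
    ⟨_, fun s => dotProduct_normal_eq_of_orthogonal hn₁ hv htn₁ htv s 0⟩
  obtain ⟨a₂, ha₂⟩ : ∃ a, ∀ s, n₂ s ⬝ᵥ v s = a :=
    ⟨_, fun s => dotProduct_normal_eq_of_orthogonal hn₂ hv htn₂ htv s 0⟩
  refine ⟨a₁, a₂, fun s => ?_, ?_⟩
  · have h := ((ht s).dotProduct (hv s)).eq_zero_of_forall_eq htv
    rw [add_dotProduct, smul_dotProduct, smul_dotProduct, ha₁, ha₂, htt, smul_eq_mul,
      smul_eq_mul] at h
    linarith
  · have hv₀ : v 0 = a₁ • n₁ 0 + a₂ • n₂ 0 := by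
      rw [← ha₁ 0, ← ha₂ 0]
      exact eq_smul_add_smul_of_orthonormal (htt 0) (hn₁n₁ 0) (hn₂n₂ 0) (htn₁ 0) (htn₂ 0)
        (hn₁n₂ 0) (htv 0)
    rw [← hP 0, ← dotProduct_self_add_smul_of_orthonormal (hn₁n₁ 0) (hn₂n₂ 0) (hn₁n₂ 0), ← hv₀]

theorem edot_eq_dotProduct : edot = dotProduct := rfl

theorem stmt1_general (α t n₁ n₂ : ℝ → Fin 3 → ℝ) (κ₁ κ₂ : ℝ → ℝ) (r : ℝ)
    (hα : ContDiff ℝ 2 α)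
    (ht : ∀ s, t s = deriv α s)
    (htt : ∀ s, edot (t s) (t s) = 1)
    (hn₁n₁ : ∀ s, edot (n₁ s) (n₁ s) = 1)
    (hn₂n₂ : ∀ s, edot (n₂ s) (n₂ s) = 1)
    (htn₁ : ∀ s, edot (t s) (n₁ s) = 0)
    (htn₂ : ∀ s, edot (t s) (n₂ s) = 0)
    (hn₁n₂ : ∀ s, edot (n₁ s) (n₂ s) = 0)
    (hdiff₁ : Differentiable ℝ n₁) (hdiff₂ : Differentiable ℝ n₂)
    (hdt : ∀ s, deriv t s = κ₁ s • n₁ s + κ₂ s • n₂ s)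
    (hdn₁ : ∀ s, deriv n₁ s = -(κ₁ s) • t s)
    (hdn₂ : ∀ s, deriv n₂ s = -(κ₂ s) • t s) :
    (∃ P : Fin 3 → ℝ, ∀ s, edot (α s - P) (α s - P) = r ^ 2) ↔
      ∃ a₁ a₂ : ℝ, (∀ s, a₁ * κ₁ s + a₂ * κ₂ s + 1 = 0) ∧ r ^ 2 = a₁ ^ 2 + a₂ ^ 2 := by
  simp only [edot_eq_dotProduct] at htt hn₁n₁ hn₂n₂ htn₁ htn₂ hn₁n₂ ⊢
  have ht_eq : t = deriv α := funext ht
  have hα' : ∀ s, HasDerivAt α (t s) s :=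
    fun s => ht_eq ▸ (hα.differentiable two_ne_zero s).hasDerivAt
  have ht' : ∀ s, HasDerivAt t (κ₁ s • n₁ s + κ₂ s • n₂ s) s :=
    fun s => hdt s ▸ (ht_eq ▸ hα.differentiable_deriv_two s).hasDerivAt
  have hn₁' : ∀ s, HasDerivAt n₁ (-κ₁ s • t s) s := fun s => hdn₁ s ▸ (hdiff₁ s).hasDerivAt
  have hn₂' : ∀ s, HasDerivAt n₂ (-κ₂ s • t s) s := fun s => hdn₂ s ▸ (hdiff₂ s).hasDerivAt
  constructor
  · rintro ⟨P, hP⟩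
    exact curvature_relation_of_sphere hα' ht' hn₁' hn₂' htt hn₁n₁ hn₂n₂ htn₁ htn₂ hn₁n₂ hP
  · rintro ⟨a₁, a₂, hrel, hr⟩
    obtain ⟨P, hP⟩ := exists_center_of_curvature_relation hα' hn₁' hn₂' hrel
    exact ⟨P, fun s => by
      rw [hP, hr, dotProduct_self_add_smul_of_orthonormal (hn₁n₁ s) (hn₂n₂ s) (hn₁n₂ s)]⟩

/-- A unit-speed curve in `ℝ³` with a rotation minimizing frame `{t, n₁, n₂}` lies on
a sphere of radius `r > 0` iff there are constants `a₁, a₂` with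
`a₁κ₁ + a₂κ₂ + 1 = 0`, and in that case `r² = a₁² + a₂²`. -/
theorem stmt1 (α t n₁ n₂ : ℝ → Fin 3 → ℝ) (κ₁ κ₂ : ℝ → ℝ) (r : ℝ) (hr : 0 < r)
    (hα : ContDiff ℝ 2 α)
    (ht : ∀ s, t s = deriv α s)
    (htt : ∀ s, edot (t s) (t s) = 1)
    (hn₁n₁ : ∀ s, edot (n₁ s) (n₁ s) = 1)
    (hn₂n₂ : ∀ s, edot (n₂ s) (n₂ s) = 1)
    (htn₁ : ∀ s, edot (t s) (n₁ s) = 0)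
    (htn₂ : ∀ s, edot (t s) (n₂ s) = 0)
    (hn₁n₂ : ∀ s, edot (n₁ s) (n₂ s) = 0)
    (hdiff₁ : Differentiable ℝ n₁) (hdiff₂ : Differentiable ℝ n₂)
    (hdt : ∀ s, deriv t s = κ₁ s • n₁ s + κ₂ s • n₂ s)
    (hdn₁ : ∀ s, deriv n₁ s = -(κ₁ s) • t s)
    (hdn₂ : ∀ s, deriv n₂ s = -(κ₂ s) • t s) :
    (∃ P : Fin 3 → ℝ, ∀ s, edot (α s - P) (α s - P) = r ^ 2) ↔
      ∃ a₁ a₂ : ℝ, (∀ s, a₁ * κ₁ s + a₂ * κ₂ s + 1 = 0) ∧ r ^ 2 = a₁ ^ 2 + a₂ ^ 2 :=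
  stmt1_general α t n₁ n₂ κ₁ κ₂ r hα ht htt hn₁n₁ hn₂n₂ htn₁ htn₂ hn₁n₂ hdiff₁ hdiff₂ hdt hdn₁ hdn₂
end

section
/- Let α : I → S²(p, r) ⊂ ℝ³ be a C³ curve parametrized by arc-length lying on the sphere of center p and radius r. Then its curvature and torsion satisfy κ = (1/r)√(1 + J²) and τ = J'/(1 + J²), where J(s) = ⟨α(s) − p, α'(s) × α''(s)⟩ is the spherical curvature. -/
noncomputable def enorm3 (x : Fin 3 → ℝ) : ℝ := Real.sqrt (edot x x)

noncomputable def cross (u v : Fin 3 → ℝ) : Fin 3 → ℝ :=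
  ![u 1 * v 2 - u 2 * v 1, u 2 * v 0 - u 0 * v 2, u 0 * v 1 - u 1 * v 0]

noncomputable def sphJ (α : ℝ → Fin 3 → ℝ) (p : Fin 3 → ℝ) (s : ℝ) : ℝ :=
  edot (α s - p) (cross (deriv α s) (deriv (deriv α) s))

open Matrix

theorem LinearMap.hasDerivAt_of_bilinear {𝕜 E F G : Type*} [NontriviallyNormedField 𝕜]
    [CompleteSpace 𝕜] [NormedAddCommGroup E] [NormedSpace 𝕜 E] [FiniteDimensional 𝕜 E]
    [NormedAddCommGroup F] [NormedSpace 𝕜 F] [FiniteDimensional 𝕜 F]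
    [NormedAddCommGroup G] [NormedSpace 𝕜 G]
    (B : E →ₗ[𝕜] F →ₗ[𝕜] G) {u : 𝕜 → E} {v : 𝕜 → F} {u' : E} {v' : F} {x : 𝕜}
    (hu : HasDerivAt u u' x) (hv : HasDerivAt v v' x) :
    HasDerivAt (fun t ↦ B (u t) (v t)) (B (u x) v' + B u' (v x)) x :=
  B.toContinuousBilinearMap.hasDerivAt_of_bilinear (fun _ ↦ hu) (fun _ ↦ hv)

theorem edot_eq_dotProduct_s3 (x y : Fin 3 → ℝ) : edot x y = x ⬝ᵥ y := rfl

theorem cross_eq_crossProduct (u v : Fin 3 → ℝ) : cross u v = u ⨯₃ v := rfl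

theorem edot_comm (x y : Fin 3 → ℝ) : edot x y = edot y x :=
  dotProduct_comm x y

theorem edot_self_nonneg (x : Fin 3 → ℝ) : 0 ≤ edot x x :=
  Finset.sum_nonneg fun i _ ↦ mul_self_nonneg (x i)

theorem enorm3_sq (x : Fin 3 → ℝ) : enorm3 x ^ 2 = edot x x :=
  Real.sq_sqrt (edot_self_nonneg x)

theorem edot_cross_cross_self (u v : Fin 3 → ℝ) :
    edot (cross u v) (cross u v) = edot u u * edot v v - edot u v ^ 2 := by
  simp only [edot_eq_dotProduct_s3, cross_eq_crossProduct, cross_dot_cross, dotProduct_comm v u]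
  ring

theorem edot_cross_assoc (a b c : Fin 3 → ℝ) : edot (cross a b) c = edot a (cross b c) := by
  simp only [edot_eq_dotProduct_s3, cross_eq_crossProduct, dotProduct_comm _ c]
  exact triple_product_permutation c a b

theorem edot_cross_swap (a b c : Fin 3 → ℝ) : edot a (cross b c) = -edot b (cross a c) := by
  simp only [edot_eq_dotProduct_s3, cross_eq_crossProduct]
  rw [triple_product_permutation b a c, ← cross_anticomm b c, dotProduct_neg, neg_neg]

/-- The triple product squared is the Gram determinant. -/
theorem edot_cross_sq (u v w : Fin 3 → ℝ) :
    edot u (cross v w) ^ 2 =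
      edot u u * edot v v * edot w w + 2 * edot u v * edot v w * edot u w
        - edot u u * edot v w ^ 2 - edot v v * edot u w ^ 2 - edot w w * edot u v ^ 2 := by
  simp only [edot, cross, Fin.sum_univ_three, Fin.isValue, cons_val_zero, cons_val_one, cons_val]
  ring

/-- Cramer's rule for the coordinates of `x` in the basis `a, b, c`. -/
theorem edot_cross_mul_edot_self (x a b c : Fin 3 → ℝ) :
    edot a (cross b c) * edot x x =
      edot x (cross b c) * edot a x + edot a (cross x c) * edot b x
        + edot a (cross b x) * edot c x := by
  simp only [edot, cross, Fin.sum_univ_three, Fin.isValue, cons_val_zero, cons_val_one, cons_val]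
  ring

section Calculus

variable {f g : ℝ → Fin 3 → ℝ} {f' g' : Fin 3 → ℝ} {s : ℝ}

theorem hasDerivAt_edot (hf : HasDerivAt f f' s) (hg : HasDerivAt g g' s) :
    HasDerivAt (fun t ↦ edot (f t) (g t)) (edot (f s) g' + edot f' (g s)) s :=
  (dotProductBilin ℝ ℝ).hasDerivAt_of_bilinear hf hg

theorem hasDerivAt_cross (hf : HasDerivAt f f' s) (hg : HasDerivAt g g' s) :
    HasDerivAt (fun t ↦ cross (f t) (g t)) (cross (f s) g' + cross f' (g s)) s :=
  crossProduct.hasDerivAt_of_bilinear hf hg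

theorem edot_add_edot_eq_zero_of_forall_edot_eq {c : ℝ} (hf : HasDerivAt f f' s)
    (hg : HasDerivAt g g' s) (hc : ∀ t, edot (f t) (g t) = c) :
    edot (f s) g' + edot f' (g s) = 0 := by
  have hconst : HasDerivAt (fun t ↦ edot (f t) (g t)) 0 s := by
    simpa only [hc] using hasDerivAt_const s c
  exact (hasDerivAt_edot hf hg).unique hconst

end Calculus

section SphericalCurve

variable {α : ℝ → Fin 3 → ℝ} {p : Fin 3 → ℝ} {r : ℝ}

theorem edot_sub_deriv_eq_zero (hα : Differentiable ℝ α)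
    (hsph : ∀ s, edot (α s - p) (α s - p) = r ^ 2) (s : ℝ) :
    edot (α s - p) (deriv α s) = 0 := by
  have h := edot_add_edot_eq_zero_of_forall_edot_eq
    ((hα s).hasDerivAt.sub_const p) ((hα s).hasDerivAt.sub_const p) hsph
  rw [edot_comm (deriv α s)] at h
  linarith

theorem edot_deriv_deriv_deriv_eq_zero (hα' : Differentiable ℝ (deriv α))
    (hunit : ∀ s, edot (deriv α s) (deriv α s) = 1) (s : ℝ) :
    edot (deriv α s) (deriv (deriv α) s) = 0 := by
  have h := edot_add_edot_eq_zero_of_forall_edot_eq (hα' s).hasDerivAt (hα' s).hasDerivAt hunit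
  rw [edot_comm (deriv (deriv α) s)] at h
  linarith

theorem edot_sub_deriv_deriv_eq_neg_one (hα : Differentiable ℝ α)
    (hα' : Differentiable ℝ (deriv α)) (hunit : ∀ s, edot (deriv α s) (deriv α s) = 1)
    (hsph : ∀ s, edot (α s - p) (α s - p) = r ^ 2) (s : ℝ) :
    edot (α s - p) (deriv (deriv α) s) = -1 := by
  have h := edot_add_edot_eq_zero_of_forall_edot_eq
    ((hα s).hasDerivAt.sub_const p) (hα' s).hasDerivAt
    (edot_sub_deriv_eq_zero hα hsph)
  linarith [hunit s]

theorem edot_sub_deriv_deriv_deriv_eq_zero (hα : Differentiable ℝ α)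
    (hα' : Differentiable ℝ (deriv α)) (hα'' : Differentiable ℝ (deriv (deriv α)))
    (hunit : ∀ s, edot (deriv α s) (deriv α s) = 1)
    (hsph : ∀ s, edot (α s - p) (α s - p) = r ^ 2) (s : ℝ) :
    edot (α s - p) (deriv (deriv (deriv α)) s) = 0 := by
  have h := edot_add_edot_eq_zero_of_forall_edot_eq
    ((hα s).hasDerivAt.sub_const p) (hα'' s).hasDerivAt
    (edot_sub_deriv_deriv_eq_neg_one hα hα' hunit hsph)
  linarith [edot_deriv_deriv_deriv_eq_zero hα' hunit s]

theorem hasDerivAt_sphJ (hα : Differentiable ℝ α) (hα' : Differentiable ℝ (deriv α))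
    (hα'' : Differentiable ℝ (deriv (deriv α))) (s : ℝ) :
    HasDerivAt (sphJ α p) (edot (α s - p) (cross (deriv α s) (deriv (deriv (deriv α)) s))) s := by
  refine (hasDerivAt_edot ((hα s).hasDerivAt.sub_const p)
    (hasDerivAt_cross (hα' s).hasDerivAt (hα'' s).hasDerivAt)).congr_deriv ?_
  simp only [edot_eq_dotProduct_s3, cross_eq_crossProduct, cross_self, add_zero,
    dot_self_cross]

theorem sq_mul_edot_deriv_deriv_eq_one_add_sq (hα : Differentiable ℝ α)
    (hα' : Differentiable ℝ (deriv α))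
    (hunit : ∀ s, edot (deriv α s) (deriv α s) = 1)
    (hsph : ∀ s, edot (α s - p) (α s - p) = r ^ 2) (s : ℝ) :
    r ^ 2 * edot (deriv (deriv α) s) (deriv (deriv α) s) = 1 + sphJ α p s ^ 2 := by
  have hgram := edot_cross_sq (α s - p) (deriv α s) (deriv (deriv α) s)
  rw [hsph, hunit, edot_sub_deriv_eq_zero hα hsph, edot_deriv_deriv_deriv_eq_zero hα' hunit,
    edot_sub_deriv_deriv_eq_neg_one hα hα' hunit hsph] at hgram
  rw [sphJ, hgram]
  ring

theorem sq_mul_edot_cross_eq_deriv_sphJ (hα : Differentiable ℝ α)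
    (hα' : Differentiable ℝ (deriv α)) (hα'' : Differentiable ℝ (deriv (deriv α)))
    (hunit : ∀ s, edot (deriv α s) (deriv α s) = 1)
    (hsph : ∀ s, edot (α s - p) (α s - p) = r ^ 2) (s : ℝ) :
    r ^ 2 * edot (cross (deriv α s) (deriv (deriv α) s)) (deriv (deriv (deriv α)) s) =
      deriv (sphJ α p) s := by
  have hcramer := edot_cross_mul_edot_self (α s - p) (deriv α s) (deriv (deriv α) s)
    (deriv (deriv (deriv α)) s)
  rw [hsph, edot_comm _ (α s - p), edot_comm (deriv (deriv α) s), edot_comm _ (α s - p),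
    edot_sub_deriv_eq_zero hα hsph, edot_sub_deriv_deriv_eq_neg_one hα hα' hunit hsph,
    edot_sub_deriv_deriv_deriv_eq_zero hα hα' hα'' hunit hsph] at hcramer
  rw [(hasDerivAt_sphJ hα hα' hα'' s).deriv, edot_cross_assoc, mul_comm, hcramer,
    edot_cross_swap (deriv α s)]
  ring

end SphericalCurve

/-- For a `C³` unit-speed curve on the sphere `S²(p, r)`, the curvature and torsion
are `κ = (1/r)√(1 + J²)` and `τ = J'/(1 + J²)`, where `J` is the spherical curvature. -/
theorem stmt3 (α : ℝ → Fin 3 → ℝ) (p : Fin 3 → ℝ) (r : ℝ) (hr : 0 < r)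
    (hα : ContDiff ℝ 3 α)
    (hunit : ∀ s, edot (deriv α s) (deriv α s) = 1)
    (hsph : ∀ s, edot (α s - p) (α s - p) = r ^ 2) :
    ∀ s,
      enorm3 (deriv (deriv α) s) = (1 / r) * Real.sqrt (1 + (sphJ α p s) ^ 2) ∧
      edot (cross (deriv α s) (deriv (deriv α) s)) (deriv (deriv (deriv α)) s) /
          (enorm3 (cross (deriv α s) (deriv (deriv α) s))) ^ 2 =
        deriv (sphJ α p) s / (1 + (sphJ α p s) ^ 2) := by
  intro s
  have hα₀ : Differentiable ℝ α := hα.differentiable (by norm_num)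
  have hα₁ : Differentiable ℝ (deriv α) := (hα.iterate_deriv' 2 1).differentiable (by norm_num)
  have hα₂ : Differentiable ℝ (deriv (deriv α)) :=
    (hα.iterate_deriv' 1 2).differentiable one_ne_zero
  have hκ := sq_mul_edot_deriv_deriv_eq_one_add_sq hα₀ hα₁ hunit hsph s
  have hτ := sq_mul_edot_cross_eq_deriv_sphJ hα₀ hα₁ hα₂ hunit hsph s
  have hr2 : r ^ 2 ≠ 0 := by positivity
  constructor
  · rw [enorm3, ← hκ, Real.sqrt_mul' _ (edot_self_nonneg _), Real.sqrt_sq hr.le]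
    field_simp
  · rw [enorm3_sq, edot_cross_cross_self, hunit, edot_deriv_deriv_deriv_eq_zero hα₁ hunit, ← hκ,
      ← hτ, one_mul, zero_pow two_ne_zero, sub_zero, mul_div_mul_left _ _ hr2]
end

section
/- Let α : I → ℝ³ be a C² regular curve lying on a level surface Σ = F⁻¹(c) of a smooth function F : ℝ³ → ℝ, equipped with an RM frame {t, n₁, n₂} with respect to the Euclidean metric. Then the functions b₀(s) = ⟨(Hess F)t, t⟩, bᵢ(s) = ⟨∇F(α(s)), nᵢ(s)⟩ satisfy b₁κ₁ + b₂κ₂ + b₀ = 0 and bᵢ' = ⟨(Hess F)t, nᵢ⟩ along α. Conversely, if these relations hold and ⟨∇F(α(s₀)), t(s₀)⟩ = 0 at some point, then F ∘ α is constant. -/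
/-- The Euclidean gradient of `F : ℝ³ → ℝ`. -/
noncomputable def gradF (F : (Fin 3 → ℝ) → ℝ) (x : Fin 3 → ℝ) : Fin 3 → ℝ :=
  fun i => fderiv ℝ F x (Pi.single i 1)

/-- The Hessian bilinear form `⟨(Hess F) u, v⟩` of `F : ℝ³ → ℝ` at `x`. -/
noncomputable def hessB (F : (Fin 3 → ℝ) → ℝ) (x u v : Fin 3 → ℝ) : ℝ :=
  fderiv ℝ (fun y => fderiv ℝ F y v) x u

lemma clm_apply_eq_sum (L : (Fin 3 → ℝ) →L[ℝ] ℝ) (v : Fin 3 → ℝ) :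
    L v = ∑ i, v i * L (Pi.single i 1) := by
  have hv : v = ∑ i, v i • (Pi.single i 1 : Fin 3 → ℝ) := by
    funext j
    simp [Finset.sum_apply, Pi.single_apply]
  conv_lhs => rw [hv, map_sum]
  simp

lemma edot_grad (F : (Fin 3 → ℝ) → ℝ) (x v : Fin 3 → ℝ) :
    edot (gradF F x) v = fderiv ℝ F x v := by
  rw [clm_apply_eq_sum (fderiv ℝ F x) v]
  simp [edot, gradF, mul_comm]

lemma edot_add_right (x y z : Fin 3 → ℝ) : edot x (y + z) = edot x y + edot x z := by
  simp [edot, mul_add, Finset.sum_add_distrib]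

lemma edot_smul_right (a : ℝ) (x y : Fin 3 → ℝ) : edot x (a • y) = a * edot x y := by
  simp [edot, Finset.mul_sum]; ring_nf
  exact Finset.sum_congr rfl fun j _ => by ring

lemma smooth_fd (F : (Fin 3 → ℝ) → ℝ) (hF : ContDiff ℝ (⊤ : ℕ∞) F) (v : Fin 3 → ℝ) :
    ContDiff ℝ (⊤ : ℕ∞) (fun x => fderiv ℝ F x v) :=
  (hF.fderiv_right (by simp)).clm_apply contDiff_const

lemma hess_sum (F : (Fin 3 → ℝ) → ℝ) (hF : ContDiff ℝ (⊤ : ℕ∞) F) (x u w : Fin 3 → ℝ) :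
    hessB F x u w = ∑ j, w j * hessB F x u (Pi.single j 1) := by
  have h1 : (fun y => fderiv ℝ F y w) = fun y => ∑ j, w j * fderiv ℝ F y (Pi.single j 1) :=
    funext fun y => clm_apply_eq_sum _ _
  have hd : ∀ j : Fin 3, DifferentiableAt ℝ (fun y => fderiv ℝ F y (Pi.single j 1)) x :=
    fun j => ((smooth_fd F hF _).differentiable (by simp)) x
  unfold hessB
  rw [h1, fderiv_fun_sum (fun j _ => ((hd j).const_mul (w j)))]
  simp only [ContinuousLinearMap.sum_apply]
  refine Finset.sum_congr rfl fun j _ => ?_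
  rw [fderiv_const_mul (hd j)]
  simp

/-- For a unit-speed curve with RM frame `{t, n₁, n₂}` on a level surface `F⁻¹(c)`,
the functions `b₀ = ⟨(Hess F)t, t⟩`, `bᵢ = ⟨∇F, nᵢ⟩` satisfy
`b₁κ₁ + b₂κ₂ + b₀ = 0` and `bᵢ' = ⟨(Hess F)t, nᵢ⟩`; conversely, if these relations
hold and `⟨∇F, t⟩` vanishes at some point, then `F ∘ α` is constant. -/
theorem stmt8 (F : (Fin 3 → ℝ) → ℝ) (hF : ContDiff ℝ (⊤ : ℕ∞) F)
    (α t n₁ n₂ : ℝ → Fin 3 → ℝ) (κ₁ κ₂ : ℝ → ℝ)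
    (hα : ContDiff ℝ 2 α)
    (ht : ∀ s, t s = deriv α s)
    (htt : ∀ s, edot (t s) (t s) = 1)
    (hn₁n₁ : ∀ s, edot (n₁ s) (n₁ s) = 1)
    (hn₂n₂ : ∀ s, edot (n₂ s) (n₂ s) = 1)
    (htn₁ : ∀ s, edot (t s) (n₁ s) = 0)
    (htn₂ : ∀ s, edot (t s) (n₂ s) = 0)
    (hn₁n₂ : ∀ s, edot (n₁ s) (n₂ s) = 0)
    (hdiff₁ : Differentiable ℝ n₁) (hdiff₂ : Differentiable ℝ n₂)
    (hdt : ∀ s, deriv t s = κ₁ s • n₁ s + κ₂ s • n₂ s)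
    (hdn₁ : ∀ s, deriv n₁ s = -(κ₁ s) • t s)
    (hdn₂ : ∀ s, deriv n₂ s = -(κ₂ s) • t s) :
    ((∃ c : ℝ, ∀ s, F (α s) = c) →
      (∀ s, edot (gradF F (α s)) (n₁ s) * κ₁ s + edot (gradF F (α s)) (n₂ s) * κ₂ s +
          hessB F (α s) (t s) (t s) = 0) ∧
      (∀ s, deriv (fun u => edot (gradF F (α u)) (n₁ u)) s = hessB F (α s) (t s) (n₁ s)) ∧
      (∀ s, deriv (fun u => edot (gradF F (α u)) (n₂ u)) s = hessB F (α s) (t s) (n₂ s)))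
    ∧
    ((∀ s, edot (gradF F (α s)) (n₁ s) * κ₁ s + edot (gradF F (α s)) (n₂ s) * κ₂ s +
          hessB F (α s) (t s) (t s) = 0) →
      (∀ s, deriv (fun u => edot (gradF F (α u)) (n₁ u)) s = hessB F (α s) (t s) (n₁ s)) →
      (∀ s, deriv (fun u => edot (gradF F (α u)) (n₂ u)) s = hessB F (α s) (t s) (n₂ s)) →
      (∃ s₀, edot (gradF F (α s₀)) (t s₀) = 0) →
      ∀ s₁ s₂, F (α s₁) = F (α s₂)) := by
  have hαd : Differentiable ℝ α := hα.differentiable (by norm_num)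
  have htd : ContDiff ℝ 1 t := by
    have hteq : t = deriv α := funext ht
    rw [hteq]
    have h2 : ContDiff ℝ (1+1) α := by norm_num; exact hα
    exact (contDiff_succ_iff_deriv.mp h2).2.2
  have htdiff : Differentiable ℝ t := htd.differentiable one_ne_zero
  have hder_α : ∀ s, HasDerivAt α (t s) s := fun s => by
    rw [ht]; exact (hαd s).hasDerivAt
  have hFd : Differentiable ℝ F := hF.differentiable (by simp)
  have hgrad_comp : ∀ (j : Fin 3) (s : ℝ),
      HasDerivAt (fun u => fderiv ℝ F (α u) (Pi.single j 1))
        (hessB F (α s) (t s) (Pi.single j 1)) s := by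
    intro j s
    have h1 : DifferentiableAt ℝ (fun y => fderiv ℝ F y (Pi.single j 1)) (α s) :=
      ((smooth_fd F hF _).differentiable (by simp)) (α s)
    exact h1.hasFDerivAt.comp_hasDerivAt s (hder_α s)
  have key : ∀ (n : ℝ → Fin 3 → ℝ), Differentiable ℝ n → ∀ s : ℝ,
      HasDerivAt (fun u => edot (gradF F (α u)) (n u))
        (hessB F (α s) (t s) (n s) + edot (gradF F (α s)) (deriv n s)) s := by
    intro n hn s
    have hterm : ∀ j : Fin 3,
        HasDerivAt (fun u => fderiv ℝ F (α u) (Pi.single j 1) * n u j)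
          (hessB F (α s) (t s) (Pi.single j 1) * n s j
            + fderiv ℝ F (α s) (Pi.single j 1) * (deriv n s j)) s := by
      intro j
      have hnj : HasDerivAt (fun u => n u j) (deriv n s j) s :=
        (hasDerivAt_pi.mp (hn s).hasDerivAt) j
      exact (hgrad_comp j s).mul hnj
    have hsum := HasDerivAt.fun_sum (fun j (_ : j ∈ Finset.univ) => hterm j)
    have hfun : (fun u => edot (gradF F (α u)) (n u))
        = fun u => ∑ j : Fin 3, fderiv ℝ F (α u) (Pi.single j 1) * n u j := rfl
    rw [hfun]
    refine hsum.congr_deriv (Eq.symm ?_)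
    rw [Finset.sum_add_distrib]
    congr 1
    rw [hess_sum F hF]
    exact Finset.sum_congr rfl fun j _ => mul_comm _ _
  have hb1 : ∀ s : ℝ, HasDerivAt (fun u => edot (gradF F (α u)) (n₁ u))
      (hessB F (α s) (t s) (n₁ s) - κ₁ s * edot (gradF F (α s)) (t s)) s := by
    intro s
    have h := key n₁ hdiff₁ s
    rw [hdn₁ s, edot_smul_right] at h
    simpa [sub_eq_add_neg, neg_mul] using h
  have hb2 : ∀ s : ℝ, HasDerivAt (fun u => edot (gradF F (α u)) (n₂ u))
      (hessB F (α s) (t s) (n₂ s) - κ₂ s * edot (gradF F (α s)) (t s)) s := by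
    intro s
    have h := key n₂ hdiff₂ s
    rw [hdn₂ s, edot_smul_right] at h
    simpa [sub_eq_add_neg, neg_mul] using h
  have hg : ∀ s : ℝ, HasDerivAt (fun u => edot (gradF F (α u)) (t u))
      (hessB F (α s) (t s) (t s)
        + (edot (gradF F (α s)) (n₁ s) * κ₁ s + edot (gradF F (α s)) (n₂ s) * κ₂ s)) s := by
    intro s
    have h := key t htdiff s
    rw [hdt s, edot_add_right, edot_smul_right, edot_smul_right] at h
    convert h using 2 <;> ring
  have hFα : ∀ s : ℝ, HasDerivAt (fun u => F (α u)) (edot (gradF F (α s)) (t s)) s := by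
    intro s
    have h := (hFd (α s)).hasFDerivAt.comp_hasDerivAt s (hder_α s)
    rw [edot_grad]
    exact h
  constructor
  · rintro ⟨c, hc⟩
    have hg0 : ∀ s, edot (gradF F (α s)) (t s) = 0 := by
      intro s
      have h1 := hFα s
      have h2 : (fun u => F (α u)) = fun _ => c := funext hc
      rw [h2] at h1
      exact h1.unique (hasDerivAt_const s c)
    refine ⟨?_, ?_, ?_⟩
    · intro s
      have h1 := hg s
      have h2 : (fun u => edot (gradF F (α u)) (t u)) = fun _ => (0:ℝ) := funext hg0
      rw [h2] at h1
      have h3 := h1.unique (hasDerivAt_const s 0)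
      linarith
    · intro s
      have h1 := hb1 s
      rw [hg0 s] at h1
      simpa using h1.deriv
    · intro s
      have h1 := hb2 s
      rw [hg0 s] at h1
      simpa using h1.deriv
  · rintro r1 _ _ ⟨s₀, hs₀⟩ s₁ s₂
    have hG : ∀ s : ℝ, HasDerivAt (fun u => edot (gradF F (α u)) (t u)) 0 s := by
      intro s
      have h1 := hg s
      have hv : hessB F (α s) (t s) (t s)
          + (edot (gradF F (α s)) (n₁ s) * κ₁ s + edot (gradF F (α s)) (n₂ s) * κ₂ s) = 0 := by
        have := r1 s; linarith
      rwa [hv] at h1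
    have hGdiff : Differentiable ℝ (fun u => edot (gradF F (α u)) (t u)) :=
      fun s => (hG s).differentiableAt
    have hGconst : ∀ s, edot (gradF F (α s)) (t s) = 0 := by
      intro s
      have h := is_const_of_deriv_eq_zero hGdiff (fun x => (hG x).deriv) s s₀
      exact h.trans hs₀
    have hFαdiff : Differentiable ℝ (fun u => F (α u)) := fun s => (hFα s).differentiableAt
    exact is_const_of_deriv_eq_zero hFαdiff
      (fun s => by rw [(hFα s).deriv, hGconst]) s₁ s₂
end
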